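/- Let G be a simple edge-Δ-critical graph, xy ∈ E(G), φ ∈ C^Δ(G - xy), and q a positive number with d(x) < q ≤ Δ - 1. Let Z = {z ∈ N(x) \ {y} : d(z) > q and φ(xz) ∈ φ̄(y)}. Then |Z| ≥ Δ - d(y) + 1 - ⌊(d(x) + d(y) - Δ - 2)/(Δ - q)⌋. -/

import Mathlib

open Finset
open scoped Classical

variable {V : Type*}

/-- `φ` is a proper edge coloring of `G` using colors `{1,…,k}`. -/
def IsProperEdgeColoring (G : SimpleGraph V) (k : ℕ) (φ : Sym2 V → ℕ) : Prop :=
  (∀ e ∈ G.edgeSet, φ e ∈ Finset.Icc 1 k) ∧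
  ∀ e ∈ G.edgeSet, ∀ f ∈ G.edgeSet, e ≠ f → (∃ v, v ∈ e ∧ v ∈ f) → φ e ≠ φ f

/-- The set of colors of `{1,…,k}` missing at `v` under `φ`. -/
noncomputable def missing (G : SimpleGraph V) (k : ℕ) (φ : Sym2 V → ℕ) (v : V) : Finset ℕ :=
  (Finset.Icc 1 k).filter (fun c => ∀ u, G.Adj v u → φ s(v, u) ≠ c)

/-- `G` is edge-`Δ`-critical: max degree `Δ`, `χ' = Δ+1`, and every proper
subgraph is edge-`Δ`-colorable. -/
def EdgeCritical (G : SimpleGraph V) [Fintype V] (Δ : ℕ) : Prop :=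
  G.maxDegree = Δ ∧
  ¬ (∃ φ, IsProperEdgeColoring G Δ φ) ∧
  (∃ φ, IsProperEdgeColoring G (Δ + 1) φ) ∧
  ∀ H : SimpleGraph V, H < G → ∃ φ, IsProperEdgeColoring H Δ φ

/-!
Work in `H = G - xy` with its colouring `φ`. Criticality of `G` means that no `Δ`-colouring of
`H` misses a colour at both `x` and `y`. Recolouring a single fan edge, and swapping colours on
a Kempe chain (a component of maximum degree two, so with at most two vertices of degree at
most one), then shows that the missing sets at `x`, `y` and the fan vertices `Z_y` are pairwise
disjoint, hence their sizes add up to at most `Δ`. Every colour missing at `y` is used at `x` on an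
edge to `Z_y`, so `|Z_y| ≥ Δ - d(y) + 1`. A fan vertex of degree at most `q` misses at least
`Δ - q` colours while `|φ̄(x)| + |φ̄(y)| ≥ 2Δ - d(x) - d(y) + 2`, so there are at most
`(d(x) + d(y) - Δ - 2) / (Δ - q)` of them.
-/

namespace SimpleGraph

theorem degree_lt_degree_of_le {G H : SimpleGraph V} {x y : V} [Fintype (H.neighborSet x)]
    [Fintype (G.neighborSet x)] (hle : H ≤ G) (hG : G.Adj x y) (hH : ¬ H.Adj x y) :
    H.degree x < G.degree x := by
  simp_rw [← card_neighborSet_eq_degree]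
  exact Set.card_lt_card ⟨fun _ hv => hle hv, fun h => hH (h hG)⟩

theorem Connected.card_degree_le_one_le_two {W : Type*} [Fintype W] {K : SimpleGraph W}
    (hK : K.Connected) (h2 : ∀ w, K.degree w ≤ 2) : #{w | K.degree w ≤ 1} ≤ 2 := by
  set S : Finset W := {w | K.degree w ≤ 1}
  have hS := S.card_le_univ
  have hedges : Fintype.card W ≤ #K.edgeFinset + 1 := by
    have := hK.card_vert_le_card_edgeSet_add_one
    rwa [Nat.card_eq_fintype_card, Nat.card_eq_fintype_card, ← edgeFinset_card] at this
  have hsum : ∑ w, K.degree w ≤ 2 * Fintype.card W - #S :=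
    calc ∑ w, K.degree w = ∑ w ∈ S, K.degree w + ∑ w ∈ Sᶜ, K.degree w :=
          (sum_add_sum_compl S _).symm
      _ ≤ ∑ w ∈ S, 1 + ∑ w ∈ Sᶜ, 2 := by
          gcongr with w hw w
          · exact (mem_filter.mp hw).2
          · exact h2 w
      _ = 2 * Fintype.card W - #S := by
          simp only [sum_const, smul_eq_mul, card_compl]
          omega
  have := K.sum_degrees_eq_twice_card_edges
  omega

theorem ConnectedComponent.card_degree_le_one_le_two [Fintype V] {H : SimpleGraph V}
    (C : H.ConnectedComponent) (h2 : ∀ v, H.degree v ≤ 2) :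
    #{v | v ∈ C ∧ H.degree v ≤ 1} ≤ 2 := by
  have hdeg (t : C) : C.toSimpleGraph.degree t = H.degree t := by
    convert degree_induce_of_neighborSet_subset fun _ h => C.mem_supp_of_adj_mem_supp t.2 h <;> rfl
  calc #{v | v ∈ C ∧ H.degree v ≤ 1}
      ≤ #(({t | C.toSimpleGraph.degree t ≤ 1} : Finset C).map (.subtype _)) := by
        refine card_le_card fun v hv => ?_
        simp only [mem_map, mem_filter, mem_univ, true_and, Function.Embedding.coe_subtype] at hv ⊢
        exact ⟨⟨v, hv.1⟩, by rw [hdeg]; exact hv.2, rfl⟩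
    _ ≤ 2 := by
        rw [card_map]
        exact C.connected_toSimpleGraph.card_degree_le_one_le_two fun t => (hdeg t).trans_le (h2 t)

end SimpleGraph

lemma Equiv.swap_apply_mem_iff {α : Type*} [DecidableEq α] {s : Finset α} {a b c : α}
    (ha : a ∈ s) (hb : b ∈ s) : Equiv.swap a b c ∈ s ↔ c ∈ s := by
  rcases eq_or_ne c a with rfl | hca
  · simp [ha, hb]
  rcases eq_or_ne c b with rfl | hcb
  · simp [ha, hb]
  rw [Equiv.swap_apply_of_ne_of_ne hca hcb]

section EdgeColoring

variable {H G : SimpleGraph V} {k : ℕ} {φ : Sym2 V → ℕ} {x y : V}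

lemma mem_missing {v : V} {c : ℕ} :
    c ∈ missing H k φ v ↔ c ∈ Icc 1 k ∧ ∀ u, H.Adj v u → φ s(v, u) ≠ c := by
  simp [missing]

lemma isProperEdgeColoring_iff :
    IsProperEdgeColoring H k φ ↔ (∀ u v, H.Adj u v → φ s(u, v) ∈ Icc 1 k) ∧
      ∀ v u w, H.Adj v u → H.Adj v w → u ≠ w → φ s(v, u) ≠ φ s(v, w) := by
  refine ⟨fun h => ⟨fun u v huv => h.1 _ huv, fun v u w hu hw huw => ?_⟩, fun h => ⟨?_, ?_⟩⟩
  · exact h.2 _ hu _ hw (fun he => huw (Sym2.congr_right.mp he)) ⟨v, by simp, by simp⟩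
  · rintro ⟨u, v⟩ huv
    exact h.1 u v huv
  · rintro e he f hf hef ⟨v, hve, hvf⟩
    obtain ⟨u, rfl⟩ : ∃ u, e = s(v, u) := ⟨Sym2.Mem.other hve, (Sym2.other_spec hve).symm⟩
    obtain ⟨w, rfl⟩ : ∃ w, f = s(v, w) := ⟨Sym2.Mem.other hvf, (Sym2.other_spec hvf).symm⟩
    exact h.2 v u w he hf (fun huw => hef (huw ▸ rfl))

lemma IsProperEdgeColoring.ne (hφ : IsProperEdgeColoring H k φ) {v u w : V} (hu : H.Adj v u)
    (hw : H.Adj v w) (huw : u ≠ w) : φ s(v, u) ≠ φ s(v, w) :=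
  (isProperEdgeColoring_iff.mp hφ).2 v u w hu hw huw

lemma IsProperEdgeColoring.mem_Icc (hφ : IsProperEdgeColoring H k φ) {u v : V}
    (huv : H.Adj u v) : φ s(u, v) ∈ Icc 1 k :=
  hφ.1 _ huv

lemma IsProperEdgeColoring.mono (hφ : IsProperEdgeColoring G k φ) (hle : H ≤ G) :
    IsProperEdgeColoring H k φ :=
  isProperEdgeColoring_iff.mpr ⟨fun _ _ huv => hφ.mem_Icc (hle huv),
    fun _ _ _ hu hw => hφ.ne (hle hu) (hle hw)⟩

lemma missing_subset_missing_of_le (hle : H ≤ G) (v : V) :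
    missing G k φ v ⊆ missing H k φ v := fun _ hc =>
  mem_missing.mpr ⟨(mem_missing.mp hc).1, fun u hu => (mem_missing.mp hc).2 u (hle hu)⟩

lemma le_card_missing_add_degree (v : V) [Fintype (H.neighborSet v)] :
    k ≤ #(missing H k φ v) + H.degree v := by
  have hsub : Icc 1 k ⊆ missing H k φ v ∪ (H.neighborFinset v).image (fun u => φ s(v, u)) := by
    intro c hc
    by_cases hcv : c ∈ missing H k φ v
    · exact mem_union_left _ hcv
    · obtain ⟨u, hu, rfl⟩ : ∃ u, H.Adj v u ∧ φ s(v, u) = c := by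
        simpa [mem_missing, hc] using hcv
      exact mem_union_right _ (mem_image_of_mem _ ((H.mem_neighborFinset v u).mpr hu))
  calc k = #(Icc 1 k) := (Nat.card_Icc 1 k).symm
    _ ≤ _ := card_le_card hsub
    _ ≤ _ := card_union_le _ _
    _ ≤ _ := by grw [card_image_le, SimpleGraph.card_neighborFinset_eq_degree]

lemma sum_card_missing_le {I : Finset V} (hI : (I : Set V).PairwiseDisjoint (missing H k φ)) :
    ∑ t ∈ I, #(missing H k φ t) ≤ k := by
  rw [← card_biUnion hI]
  calc #(I.biUnion (missing H k φ)) ≤ #(Icc 1 k) :=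
        card_le_card (biUnion_subset.mpr fun _ _ _ hc => (mem_missing.mp hc).1)
    _ = k := Nat.card_Icc 1 k

lemma card_mul_sub_le_sum_card_missing [∀ v, Fintype (H.neighborSet v)] {W : Finset V} {q : ℝ}
    (hW : ∀ z ∈ W, (H.degree z : ℝ) ≤ q) :
    #W * ((k : ℝ) - q) ≤ ∑ z ∈ W, (#(missing H k φ z) : ℝ) := by
  rw [← nsmul_eq_mul]
  refine card_nsmul_le_sum W _ _ fun z hz => ?_
  have : (k : ℝ) ≤ #(missing H k φ z) + H.degree z := by
    exact_mod_cast le_card_missing_add_degree z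
  linarith [hW z hz]

lemma IsProperEdgeColoring.update_deleteEdges
    (hφ : IsProperEdgeColoring (G.deleteEdges {s(x, y)}) k φ) {c : ℕ}
    (hcx : c ∈ missing (G.deleteEdges {s(x, y)}) k φ x)
    (hcy : c ∈ missing (G.deleteEdges {s(x, y)}) k φ y) :
    IsProperEdgeColoring G k (Function.update φ s(x, y) c) := by
  set G' := G.deleteEdges {s(x, y)}
  have hadj {u v : V} (huv : G.Adj u v) : s(u, v) = s(x, y) ∨ s(u, v) ≠ s(x, y) ∧ G'.Adj u v := by
    by_cases h : s(u, v) = s(x, y)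
    · exact .inl h
    · exact .inr ⟨h, SimpleGraph.deleteEdges_adj.mpr ⟨huv, h⟩⟩
  have hmiss {v u : V} (hv : s(v, u) = s(x, y)) {w : V} (hw : G'.Adj v w) : c ≠ φ s(v, w) := by
    rcases Sym2.mem_iff.mp (hv ▸ Sym2.mem_mk_left v u) with rfl | rfl
    exacts [((mem_missing.mp hcx).2 w hw).symm, ((mem_missing.mp hcy).2 w hw).symm]
  refine isProperEdgeColoring_iff.mpr ⟨fun u v huv => ?_, fun v u w hu hw huw => ?_⟩
  · rcases hadj huv with h | ⟨hne, h⟩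
    · simpa [h] using (mem_missing.mp hcx).1
    · simpa [Function.update_of_ne hne] using hφ.mem_Icc h
  · rcases hadj hu with hu' | ⟨hu', hu⟩ <;> rcases hadj hw with hw' | ⟨hw', hw⟩
    · exact absurd (Sym2.congr_right.mp (hu'.trans hw'.symm)) huw
    · simpa [hu', Function.update_of_ne hw'] using hmiss hu' hw
    · simpa [hw', Function.update_of_ne hu'] using (hmiss hw' hu).symm
    · simpa [Function.update_of_ne hu', Function.update_of_ne hw'] using hφ.ne hu hw huw

lemma IsProperEdgeColoring.update (hφ : IsProperEdgeColoring H k φ) {u v : V} {c : ℕ}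
    (hcu : c ∈ missing H k φ u) (hcv : c ∈ missing H k φ v) :
    IsProperEdgeColoring H k (Function.update φ s(u, v) c) :=
  (hφ.mono (H.deleteEdges_le _)).update_deleteEdges
    (missing_subset_missing_of_le (H.deleteEdges_le _) u hcu)
    (missing_subset_missing_of_le (H.deleteEdges_le _) v hcv)

lemma missing_update_of_notMem {e : Sym2 V} {v : V} (hv : v ∉ e) (c : ℕ) :
    missing H k (Function.update φ e c) v = missing H k φ v := by
  ext d
  simp only [mem_missing]
  refine and_congr_right' (forall_congr' fun u => imp_congr_right fun _ => ?_)
  rw [Function.update_of_ne (fun h : s(v, u) = e => hv (h ▸ Sym2.mem_mk_left v u))]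

lemma IsProperEdgeColoring.mem_missing_update_self (hφ : IsProperEdgeColoring H k φ) {u v : V}
    (huv : H.Adj u v) {c : ℕ} (hc : c ≠ φ s(u, v)) :
    φ s(u, v) ∈ missing H k (Function.update φ s(u, v) c) u := by
  refine mem_missing.mpr ⟨hφ.mem_Icc huv, fun w hw => ?_⟩
  by_cases hwv : w = v
  · subst hwv
    simpa using hc
  · rw [Function.update_of_ne (fun h => hwv (Sym2.congr_right.mp h))]
    exact hφ.ne hw huv hwv

def DisjointMissing (H : SimpleGraph V) (k : ℕ) (x y : V) : Prop :=
  ∀ ψ, IsProperEdgeColoring H k ψ → Disjoint (missing H k ψ x) (missing H k ψ y)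

lemma EdgeCritical.disjointMissing [Fintype V] {Δ : ℕ} (hc : EdgeCritical G Δ) (x y : V) :
    DisjointMissing (G.deleteEdges {s(x, y)}) Δ x y := fun _ hψ =>
  disjoint_left.mpr fun _ hcx hcy => hc.2.1 ⟨_, hψ.update_deleteEdges hcx hcy⟩

def kempeGraph (H : SimpleGraph V) (φ : Sym2 V → ℕ) (α β : ℕ) : SimpleGraph V where
  Adj a b := H.Adj a b ∧ (φ s(a, b) = α ∨ φ s(a, b) = β)
  symm.symm _ _ h := ⟨h.1.symm, by rw [Sym2.eq_swap]; exact h.2⟩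
  loopless.irrefl a h := H.loopless.irrefl a h.1

/-- Every edge meeting the Kempe chain through `w` is recoloured by the transposition; this is
harmless, as an `α`/`β`-edge meeting the chain lies in it and the other colours are fixed. -/
noncomputable def kempeSwap (H : SimpleGraph V) (φ : Sym2 V → ℕ) (α β : ℕ) (w : V) :
    Sym2 V → ℕ := fun e =>
  if ∃ a ∈ e, (kempeGraph H φ α β).Reachable w a then Equiv.swap α β (φ e) else φ e

section Kempe

variable {α β : ℕ} {w t : V}

lemma kempeSwap_of_reachable (ht : (kempeGraph H φ α β).Reachable w t) (u : V) :
    kempeSwap H φ α β w s(t, u) = Equiv.swap α β (φ s(t, u)) :=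
  if_pos ⟨t, Sym2.mem_mk_left t u, ht⟩

lemma kempeSwap_of_not_reachable (ht : ¬ (kempeGraph H φ α β).Reachable w t) {u : V}
    (htu : H.Adj t u) : kempeSwap H φ α β w s(t, u) = φ s(t, u) := by
  refine ite_eq_right_iff.mpr fun ⟨a, ha, hwa⟩ => ?_
  rcases Sym2.mem_iff.mp ha with rfl | rfl
  · exact absurd hwa ht
  · -- an `α`/`β`-coloured edge `ta` would put `t` on the chain as well
    refine Equiv.swap_apply_of_ne_of_ne (fun h => ht ?_) (fun h => ht ?_) <;>
      exact hwa.trans (SimpleGraph.Adj.reachable ⟨htu.symm, by rw [Sym2.eq_swap]; simp [h]⟩)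

lemma IsProperEdgeColoring.kempeSwap (hφ : IsProperEdgeColoring H k φ) (hα : α ∈ Icc 1 k)
    (hβ : β ∈ Icc 1 k) (w : V) :
    IsProperEdgeColoring H k (kempeSwap H φ α β w) := by
  refine isProperEdgeColoring_iff.mpr ⟨fun u v huv => ?_, fun v u u' hu hu' huu' => ?_⟩
  · by_cases hwu : (kempeGraph H φ α β).Reachable w u
    · rw [kempeSwap_of_reachable hwu, Equiv.swap_apply_mem_iff hα hβ]
      exact hφ.mem_Icc huv
    · rw [kempeSwap_of_not_reachable hwu huv]
      exact hφ.mem_Icc huv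
  · by_cases hwv : (kempeGraph H φ α β).Reachable w v
    · rw [kempeSwap_of_reachable hwv, kempeSwap_of_reachable hwv]
      exact (Equiv.injective _).ne (hφ.ne hu hu' huu')
    · rw [kempeSwap_of_not_reachable hwv hu, kempeSwap_of_not_reachable hwv hu']
      exact hφ.ne hu hu' huu'

lemma mem_missing_kempeSwap_iff_of_reachable (hα : α ∈ Icc 1 k) (hβ : β ∈ Icc 1 k)
    (ht : (kempeGraph H φ α β).Reachable w t) {c : ℕ} :
    c ∈ missing H k (kempeSwap H φ α β w) t ↔ Equiv.swap α β c ∈ missing H k φ t := by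
  simp only [mem_missing, kempeSwap_of_reachable ht, Equiv.swap_apply_mem_iff hα hβ, ne_eq,
    Equiv.swap_apply_eq_iff]

lemma missing_kempeSwap_of_not_reachable (ht : ¬ (kempeGraph H φ α β).Reachable w t) :
    missing H k (kempeSwap H φ α β w) t = missing H k φ t := by
  ext c
  simp only [mem_missing]
  refine and_congr_right' (forall_congr' fun u => imp_congr_right fun hu => ?_)
  rw [kempeSwap_of_not_reachable ht hu]

lemma mem_missing_kempeSwap_iff_of_ne (hα : α ∈ Icc 1 k) (hβ : β ∈ Icc 1 k) {c : ℕ}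
    (hcα : c ≠ α) (hcβ : c ≠ β) :
    c ∈ missing H k (kempeSwap H φ α β w) t ↔ c ∈ missing H k φ t := by
  by_cases ht : (kempeGraph H φ α β).Reachable w t
  · rw [mem_missing_kempeSwap_iff_of_reachable hα hβ ht, Equiv.swap_apply_of_ne_of_ne hcα hcβ]
  · rw [missing_kempeSwap_of_not_reachable ht]

end Kempe

variable [Fintype V]

lemma succ_le_card_missing_deleteEdges_add_degree (hxy : G.Adj x y) :
    k + 1 ≤ #(missing (G.deleteEdges {s(x, y)}) k φ x) + G.degree x := by
  have := le_card_missing_add_degree (H := G.deleteEdges {s(x, y)}) (k := k) (φ := φ) x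
  have := G.degree_lt_degree_of_le (H := G.deleteEdges {s(x, y)}) (G.deleteEdges_le _) hxy
    (by simp)
  omega

lemma EdgeCritical.missing_deleteEdges_nonempty {Δ : ℕ} (hc : EdgeCritical G Δ)
    (hxy : G.Adj x y) : (missing (G.deleteEdges {s(x, y)}) Δ φ x).Nonempty := by
  have := succ_le_card_missing_deleteEdges_add_degree (k := Δ) (φ := φ) hxy
  have := hc.1 ▸ G.degree_le_maxDegree x
  exact card_pos.mp (by omega)

noncomputable def vizingFan (H : SimpleGraph V) (k : ℕ) (φ : Sym2 V → ℕ) (x y : V) : Finset V :=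
  {z | H.Adj x z ∧ φ s(x, z) ∈ missing H k φ y}

lemma mem_vizingFan {z : V} :
    z ∈ vizingFan H k φ x y ↔ H.Adj x z ∧ φ s(x, z) ∈ missing H k φ y := by
  simp [vizingFan]

lemma mem_vizingFan_deleteEdges {z : V} :
    z ∈ vizingFan (G.deleteEdges {s(x, y)}) k φ x y ↔
      G.Adj x z ∧ z ≠ y ∧ φ s(x, z) ∈ missing (G.deleteEdges {s(x, y)}) k φ y := by
  simp only [mem_vizingFan, SimpleGraph.deleteEdges_adj, Set.mem_singleton_iff, Sym2.congr_right,
    and_assoc]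

lemma DisjointMissing.disjoint_missing_of_mem_fan (hD : DisjointMissing H k x y)
    (hφ : IsProperEdgeColoring H k φ) {w : V} (hw : w ∈ insert y (vizingFan H k φ x y)) :
    Disjoint (missing H k φ x) (missing H k φ w) := by
  obtain rfl | hw := mem_insert.mp hw
  · exact hD φ hφ
  obtain ⟨hxw, hwy⟩ := mem_vizingFan.mp hw
  refine disjoint_left.mpr fun c hcx hcw => ?_
  -- recolouring `xw` with `c` frees `φ s(x, w)` at `x`, while it stays missing at `y`
  have hy : y ∉ s(x, w) := by
    intro hy
    rcases Sym2.mem_iff.mp hy with rfl | rfl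
    · exact (mem_missing.mp hwy).2 w hxw rfl
    · exact (mem_missing.mp hwy).2 x hxw.symm (congrArg φ Sym2.eq_swap)
  refine disjoint_left.mp (hD _ (hφ.update hcx hcw))
    (hφ.mem_missing_update_self hxw ((mem_missing.mp hcx).2 w hxw).symm) ?_
  rwa [missing_update_of_notMem hy]

lemma degree_kempeGraph_le_card_sdiff (hφ : IsProperEdgeColoring H k φ) (α β : ℕ) (t : V) :
    (kempeGraph H φ α β).degree t ≤ #({α, β} \ missing H k φ t) := by
  rw [← SimpleGraph.card_neighborFinset_eq_degree]
  refine card_le_card_of_injOn (fun u => φ s(t, u)) (fun u hu => ?_) (fun u hu u' hu' h => ?_)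
  · obtain ⟨htu, hc⟩ := (SimpleGraph.mem_neighborFinset _ _ _).mp hu
    refine mem_sdiff.mpr ⟨by simpa using hc, fun hm => (mem_missing.mp hm).2 u htu rfl⟩
  · by_contra hne
    exact hφ.ne ((SimpleGraph.mem_neighborFinset _ _ _).mp hu).1
      ((SimpleGraph.mem_neighborFinset _ _ _).mp hu').1 hne h

lemma degree_kempeGraph_le_two (hφ : IsProperEdgeColoring H k φ) (α β : ℕ) (t : V) :
    (kempeGraph H φ α β).degree t ≤ 2 :=
  (degree_kempeGraph_le_card_sdiff hφ α β t).trans ((card_le_card sdiff_subset).trans card_le_two)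

lemma degree_kempeGraph_le_one (hφ : IsProperEdgeColoring H k φ) {α β c : ℕ} {t : V}
    (hc : c ∈ ({α, β} : Finset ℕ)) (ht : c ∈ missing H k φ t) :
    (kempeGraph H φ α β).degree t ≤ 1 := by
  have hsub : {α, β} \ missing H k φ t ⊆ ({α, β} : Finset ℕ).erase c := fun d hd =>
    mem_erase.mpr ⟨fun h => (mem_sdiff.mp hd).2 (h ▸ ht), (mem_sdiff.mp hd).1⟩
  have := card_le_card hsub
  rw [card_erase_of_mem hc] at this
  have := card_le_two (a := α) (b := β)
  have := degree_kempeGraph_le_card_sdiff hφ α β t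
  omega

lemma DisjointMissing.reachable_kempeGraph (hD : DisjointMissing H k x y)
    (hφ : IsProperEdgeColoring H k φ) {α β : ℕ} {w : V} (hα : α ∈ missing H k φ x)
    (hβ : β ∈ missing H k φ w) (hw : w ∈ insert y (vizingFan H k φ x y)) :
    (kempeGraph H φ α β).Reachable w x := by
  by_contra hx
  have hαI := (mem_missing.mp hα).1
  have hβI := (mem_missing.mp hβ).1
  have hαx : α ∈ missing H k (kempeSwap H φ α β w) x := by rwa [missing_kempeSwap_of_not_reachable hx]
  have hαw : α ∈ missing H k (kempeSwap H φ α β w) w := by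
    rwa [mem_missing_kempeSwap_iff_of_reachable hαI hβI .rfl, Equiv.swap_apply_left]
  have hwψ : w ∈ insert y (vizingFan H k (kempeSwap H φ α β w) x y) := by
    obtain rfl | hw := mem_insert.mp hw
    · exact mem_insert_self _ _
    obtain ⟨hxw, hwy⟩ := mem_vizingFan.mp hw
    have hα' : φ s(x, w) ≠ α := (mem_missing.mp hα).2 w hxw
    have hβ' : φ s(x, w) ≠ β := by
      rw [Sym2.eq_swap]
      exact (mem_missing.mp hβ).2 x hxw.symm
    refine mem_insert_of_mem (mem_vizingFan.mpr ⟨hxw, ?_⟩)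
    rwa [kempeSwap_of_not_reachable hx hxw, mem_missing_kempeSwap_iff_of_ne hαI hβI hα' hβ']
  exact disjoint_left.mp (hD.disjoint_missing_of_mem_fan (hφ.kempeSwap hαI hβI w) hwψ) hαx hαw

lemma DisjointMissing.disjoint_missing_of_mem_fan_of_ne (hD : DisjointMissing H k x y)
    (hφ : IsProperEdgeColoring H k φ) (hx : (missing H k φ x).Nonempty) {u v : V}
    (hu : u ∈ insert y (vizingFan H k φ x y)) (hv : v ∈ insert y (vizingFan H k φ x y))
    (huv : u ≠ v) : Disjoint (missing H k φ u) (missing H k φ v) := by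
  obtain ⟨α, hα⟩ := hx
  refine disjoint_left.mpr fun β hβu hβv => ?_
  have hne {w : V} (hw : w ∈ insert y (vizingFan H k φ x y)) : w ≠ x := fun h =>
    disjoint_left.mp (hD.disjoint_missing_of_mem_fan hφ hw) hα (h ▸ hα)
  -- `x`, `u`, `v` would be three ends of the path formed by the Kempe chain through `x`
  set C := (kempeGraph H φ α β).connectedComponentMk x
  have hC {w : V} (hw : w ∈ insert y (vizingFan H k φ x y)) (hβw : β ∈ missing H k φ w) :
      w ∈ C := SimpleGraph.ConnectedComponent.sound (hD.reachable_kempeGraph hφ hα hβw hw)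
  have hsub : ({x, u, v} : Finset V) ⊆
      ({w | w ∈ C ∧ (kempeGraph H φ α β).degree w ≤ 1} : Finset V) := by
    intro w hw
    simp only [mem_insert, mem_singleton] at hw
    rcases hw with rfl | rfl | rfl
    · exact mem_filter.mpr ⟨mem_univ _, rfl, degree_kempeGraph_le_one hφ (by simp) hα⟩
    · exact mem_filter.mpr ⟨mem_univ _, hC hu hβu, degree_kempeGraph_le_one hφ (by simp) hβu⟩
    · exact mem_filter.mpr ⟨mem_univ _, hC hv hβv, degree_kempeGraph_le_one hφ (by simp) hβv⟩
  have h3 : #({x, u, v} : Finset V) = 3 :=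
    card_eq_three.mpr ⟨x, u, v, (hne hu).symm, (hne hv).symm, huv, rfl⟩
  have := (card_le_card hsub).trans (C.card_degree_le_one_le_two (degree_kempeGraph_le_two hφ α β))
  omega

lemma DisjointMissing.pairwiseDisjoint_missing (hD : DisjointMissing H k x y)
    (hφ : IsProperEdgeColoring H k φ) (hx : (missing H k φ x).Nonempty) :
    ((insert x (insert y (vizingFan H k φ x y)) : Finset V) : Set V).PairwiseDisjoint
      (missing H k φ) := by
  intro u hu v hv huv
  rcases mem_insert.mp hu with rfl | hu <;> rcases mem_insert.mp hv with rfl | hv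
  · exact absurd rfl huv
  · exact hD.disjoint_missing_of_mem_fan hφ hv
  · exact (hD.disjoint_missing_of_mem_fan hφ hu).symm
  · exact hD.disjoint_missing_of_mem_fan_of_ne hφ hx hu hv huv

lemma DisjointMissing.card_missing_add_sum_le (hD : DisjointMissing H k x y)
    (hφ : IsProperEdgeColoring H k φ) (hx : (missing H k φ x).Nonempty) {W : Finset V}
    (hW : W ⊆ vizingFan H k φ x y) :
    #(missing H k φ x) + #(missing H k φ y) + ∑ z ∈ W, #(missing H k φ z) ≤ k := by
  have hxy : x ≠ y := by
    rintro rfl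
    obtain ⟨α, hα⟩ := hx
    exact disjoint_left.mp (hD φ hφ) hα hα
  have hxW : x ∉ W := fun h => H.loopless.irrefl x (mem_vizingFan.mp (hW h)).1
  have hyW : y ∉ W := fun h => by
    obtain ⟨hxy', hy⟩ := mem_vizingFan.mp (hW h)
    exact (mem_missing.mp hy).2 x hxy'.symm (congrArg φ Sym2.eq_swap)
  have := sum_card_missing_le ((hD.pairwiseDisjoint_missing hφ hx).subset
    (coe_subset.mpr (insert_subset_insert _ (insert_subset_insert _ hW))))
  rwa [sum_insert (by simp [hxy, hxW]), sum_insert hyW, ← add_assoc] at this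

lemma DisjointMissing.card_missing_le_card_vizingFan (hD : DisjointMissing H k x y)
    (hφ : IsProperEdgeColoring H k φ) :
    #(missing H k φ y) ≤ #(vizingFan H k φ x y) := by
  refine card_le_card_of_surjOn (fun z => φ s(x, z)) fun c hc => ?_
  -- a colour missing at `y` is not missing at `x`, so it is used on an edge `xz`
  have hcx : c ∉ missing H k φ x := fun h => disjoint_left.mp (hD φ hφ) h hc
  obtain ⟨z, hxz, rfl⟩ : ∃ z, H.Adj x z ∧ φ s(x, z) = c := by
    simpa [mem_missing, (mem_missing.mp hc).1] using hcx
  exact ⟨z, mem_vizingFan.mpr ⟨hxz, hc⟩, rfl⟩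

end EdgeColoring

theorem stmt7_general (G : SimpleGraph V) [Fintype V] (Δ : ℕ) (hc : EdgeCritical G Δ)
    (x y : V) (hxy : G.Adj x y) (φ : Sym2 V → ℕ)
    (hφ : IsProperEdgeColoring (G.deleteEdges {s(x, y)}) Δ φ)
    (q : ℝ) (hq2 : q ≤ (Δ : ℝ) - 1) :
    (Δ : ℝ) - (G.degree y : ℝ) + 1 -
        ⌊((G.degree x : ℝ) + (G.degree y : ℝ) - (Δ : ℝ) - 2) / ((Δ : ℝ) - q)⌋ ≤
      ((Finset.univ.filter (fun z => G.Adj x z ∧ z ≠ y ∧ q < (G.degree z : ℝ) ∧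
        φ s(x, z) ∈ missing (G.deleteEdges {s(x, y)}) Δ φ y)).card : ℝ) := by
  set G' := G.deleteEdges {s(x, y)}
  set F := vizingFan G' Δ φ x y
  set W := F.filter fun z => ¬ q < G.degree z
  have hD : DisjointMissing G' Δ x y := hc.disjointMissing x y
  have hmx : Δ + 1 ≤ #(missing G' Δ φ x) + G.degree x :=
    succ_le_card_missing_deleteEdges_add_degree hxy
  have hmy : Δ + 1 ≤ #(missing G' Δ φ y) + G.degree y := by
    have := succ_le_card_missing_deleteEdges_add_degree (k := Δ) (φ := φ) hxy.symm
    rwa [Sym2.eq_swap] at this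
  have hsum : #(missing G' Δ φ x) + #(missing G' Δ φ y) + ∑ z ∈ W, #(missing G' Δ φ z) ≤ Δ :=
    hD.card_missing_add_sum_le hφ (hc.missing_deleteEdges_nonempty hxy) (filter_subset _ F)
  have hW : #W * ((Δ : ℝ) - q) ≤ ∑ z ∈ W, (#(missing G' Δ φ z) : ℝ) :=
    card_mul_sub_le_sum_card_missing fun z hz =>
      (Nat.cast_le.mpr (G'.degree_le_of_le (G.deleteEdges_le _))).trans
        (not_lt.mp (mem_filter.mp hz).2)
  have hWfloor : (#W : ℤ) ≤ ⌊((G.degree x : ℝ) + G.degree y - Δ - 2) / (Δ - q)⌋ := by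
    rw [Int.le_floor, le_div_iff₀ (by linarith)]
    rify at hsum hmx hmy
    push_cast at hsum ⊢
    linarith
  have hF : #(missing G' Δ φ y) ≤ #F := hD.card_missing_le_card_vizingFan hφ
  have hsplit : #F = #{z | G.Adj x z ∧ z ≠ y ∧ q < (G.degree z : ℝ) ∧
      φ s(x, z) ∈ missing G' Δ φ y} + #W := by
    rw [← card_filter_add_card_filter_not (fun z => q < (G.degree z : ℝ))]
    congr 2
    ext z
    simp only [F, G', mem_filter, mem_univ, true_and, mem_vizingFan_deleteEdges]
    tauto
  rify at hmy hF hsplit hWfloor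
  linarith

theorem stmt7 (G : SimpleGraph V) [Fintype V] (Δ : ℕ) (hc : EdgeCritical G Δ)
    (x y : V) (hxy : G.Adj x y) (φ : Sym2 V → ℕ)
    (hφ : IsProperEdgeColoring (G.deleteEdges {s(x, y)}) Δ φ)
    (q : ℝ) (hq0 : 0 < q) (hq1 : (G.degree x : ℝ) < q) (hq2 : q ≤ (Δ : ℝ) - 1) :
    (Δ : ℝ) - (G.degree y : ℝ) + 1 -
        ⌊((G.degree x : ℝ) + (G.degree y : ℝ) - (Δ : ℝ) - 2) / ((Δ : ℝ) - q)⌋ ≤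
      ((Finset.univ.filter (fun z => G.Adj x z ∧ z ≠ y ∧ q < (G.degree z : ℝ) ∧
        φ s(x, z) ∈ missing (G.deleteEdges {s(x, y)}) Δ φ y)).card : ℝ) :=
  stmt7_general G Δ hc x y hxy φ hφ q hq2
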